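/- Let M be an expanding integer n×n matrix with |det M| = 2, and let d* ∈ ℤ^n \ M^Tℤ^n. Suppose the trigonometric polynomial c(ξ) = Σ_{k∈Q} c_k e^{2πi(k,ξ)} (with finite Q ⊂ ℤ^n and c(0) = 1) has a zero of order at least ℓ+1 at the point v = M^{−T} d*. Then c has at least ℓ+2 nonzero coefficients, i.e., |{k : c_k ≠ 0}| ≥ ℓ+2. -/

import Mathlib

open Complex

/-- The real vector associated with an integer vector. -/
def intVec {n : ℕ} (k : Fin n → ℤ) : Fin n → ℝ := fun i => (k i : ℝ)

/-- An integer matrix is expanding if all its (complex) eigenvalues have modulus `> 1`. -/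
def IsExpanding {n : ℕ} (M : Matrix (Fin n) (Fin n) ℤ) : Prop :=
  ∀ μ : ℂ, (Matrix.charpoly (M.map (Int.cast : ℤ → ℂ))).IsRoot μ → 1 < ‖μ‖

/-- The trigonometric polynomial `c(ξ) = Σ_{k∈Q} c_k e^{2πi(k,ξ)}`. -/
noncomputable def maskP {n : ℕ} (Q : Finset (Fin n → ℤ)) (cc : (Fin n → ℤ) → ℂ)
    (ξ : Fin n → ℝ) : ℂ :=
  ∑ k ∈ Q, cc k * Complex.exp (2 * (Real.pi : ℂ) * Complex.I * (∑ i, ((k i : ℝ) : ℂ) * (ξ i : ℂ)))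

/-!
On the line `t ↦ v + t • u` the mask is the exponential sum `∑ₖ wₖ exp (zₖ t)` with
`wₖ = cₖ e^{2πi(k,v)}` and `zₖ = 2πi(k,u)`, whose `r`-th derivative at `0` is the moment
`∑ₖ wₖ zₖ^r`. Since finitely many proper hyperplanes do not cover `ℝⁿ`, `u` can be chosen so
that the `zₖ` are distinct on the support of `c`. A zero of order `ℓ+1` at `v` together with at
most `ℓ+1` nonzero coefficients then gives a nonsingular Vandermonde system forcing every `wₖ`,
hence every `cₖ`, to vanish, contradicting `c(0) = 1`.
-/

open Matrix
open scoped Real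

theorem Module.Dual.exists_injOn {K M : Type*} [Field K] [Infinite K] [AddCommGroup M]
    [Module K M] {s : Set M} (hs : s.Finite) : ∃ f : Module.Dual K M, Set.InjOn f s := by
  have : Finite s := hs
  obtain ⟨f, hf⟩ := Module.exists_dual_forall_apply_ne_zero (K := K)
    (fun p : {p : s × s // p.1 ≠ p.2} => (p.1.1 : M) - p.1.2)
    (fun p => sub_ne_zero.mpr (Subtype.coe_ne_coe.mpr p.2))
  refine ⟨f, fun x hx y hy hxy => by_contra fun hne => ?_⟩
  exact hf ⟨(⟨x, hx⟩, ⟨y, hy⟩), fun h => hne (congrArg Subtype.val h)⟩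
    (by simp only [map_sub, hxy, sub_self])

theorem exists_injOn_dotProduct {ι K : Type*} [Fintype ι] [DecidableEq ι] [Field K] [Infinite K]
    {s : Set (ι → K)} (hs : s.Finite) : ∃ u : ι → K, Set.InjOn (· ⬝ᵥ u) s := by
  obtain ⟨f, hf⟩ := Module.Dual.exists_injOn (K := K) hs
  set u := (dotProductEquiv K ι).symm f
  have hfu (x : ι → K) : f x = x ⬝ᵥ u := by
    rw [dotProduct_comm, ← dotProductEquiv_apply_apply, LinearEquiv.apply_symm_apply]
  exact ⟨u, fun x hx y hy hxy => hf hx hy (by rw [hfu, hfu]; exact hxy)⟩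

theorem Finset.eq_zero_of_forall_sum_mul_pow_eq_zero {ι R : Type*} [CommRing R] [IsDomain R]
    (s : Finset ι) (w z : ι → R) (hz : Set.InjOn z s)
    (h : ∀ r < s.card, ∑ k ∈ s, w k * z k ^ r = 0) : ∀ k ∈ s, w k = 0 := by
  set e := s.equivFin.symm
  have hw : (fun j => w (e j)) = 0 := by
    refine Matrix.eq_zero_of_forall_pow_sum_mul_pow_eq_zero (f := fun j => z (e j))
      (fun i j hij => e.injective (Subtype.ext (hz (e i).2 (e j).2 hij))) fun r => ?_
    rw [← h r r.isLt, ← s.sum_coe_sort]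
    exact e.sum_comp fun k => w k * z k ^ (r : ℕ)
  intro k hk
  simpa [e] using congrFun hw (s.equivFin ⟨k, hk⟩)

theorem iteratedDeriv_sum_mul_cexp {ι : Type*} (s : Finset ι) (w z : ι → ℂ) (r : ℕ) :
    iteratedDeriv r (fun t : ℝ => ∑ k ∈ s, w k * exp (z k * t)) =
      fun t : ℝ => ∑ k ∈ s, w k * z k ^ r * exp (z k * t) := by
  have hexp (k : ι) (t : ℝ) : HasDerivAt (fun t : ℝ => exp (z k * t)) (exp (z k * t) * z k) t := by
    simpa using ((hasDerivAt_id t).ofReal_comp.const_mul (z k)).cexp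
  induction r with
  | zero => simp
  | succ r ih =>
    rw [iteratedDeriv_succ, ih]
    funext t
    refine (HasDerivAt.fun_sum fun k _ => (hexp k t).const_mul (w k * z k ^ r)).deriv.trans ?_
    exact Finset.sum_congr rfl fun k _ => by ring

theorem iteratedDeriv_comp_add_smul {E F : Type*} [NormedAddCommGroup E] [NormedSpace ℝ E]
    [NormedAddCommGroup F] [NormedSpace ℝ F] {r : ℕ} {f : E → F} (hf : ContDiff ℝ r f)
    (v u : E) (t : ℝ) :
    iteratedDeriv r (fun t : ℝ => f (v + t • u)) t =
      iteratedFDeriv ℝ r f (v + t • u) (fun _ => u) := by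
  have hshift : ContDiff ℝ r (fun y => f (v + y)) := hf.comp (contDiff_const.add contDiff_id)
  have hline : (fun t : ℝ => f (v + t • u)) =
      (fun y => f (v + y)) ∘ (ContinuousLinearMap.id ℝ ℝ).smulRight u := rfl
  rw [iteratedDeriv_eq_iteratedFDeriv, hline,
    ContinuousLinearMap.iteratedFDeriv_comp_right _ hshift _ le_rfl, iteratedFDeriv_comp_add_left]
  simp

theorem contDiff_maskP {n : ℕ} (Q : Finset (Fin n → ℤ)) (cc : (Fin n → ℤ) → ℂ) :
    ContDiff ℝ ⊤ (maskP Q cc) := by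
  have : ContDiff ℝ ⊤ (fun x : ℝ => (x : ℂ)) := ofRealCLM.contDiff
  unfold maskP
  fun_prop

theorem maskP_add_smul {n : ℕ} (Q : Finset (Fin n → ℤ)) (cc : (Fin n → ℤ) → ℂ)
    (v u : Fin n → ℝ) (t : ℝ) :
    maskP Q cc (v + t • u) = ∑ k ∈ Q, cc k * exp (2 * (π : ℂ) * I * (intVec k ⬝ᵥ v : ℝ)) *
      exp (2 * (π : ℂ) * I * (intVec k ⬝ᵥ u : ℝ) * t) := by
  unfold maskP
  refine Finset.sum_congr rfl fun k _ => ?_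
  rw [mul_assoc (cc k), ← exp_add]
  congr 2
  simp only [intVec, dotProduct, Pi.add_apply, Pi.smul_apply, smul_eq_mul]
  push_cast
  simp only [mul_add, Finset.sum_add_distrib, Finset.mul_sum, Finset.sum_mul]
  congr 1
  exact Finset.sum_congr rfl fun i _ => by ring

theorem maskP_coeff_eq_zero_of_iteratedFDeriv_eq_zero {n : ℕ} (Q : Finset (Fin n → ℤ))
    (cc : (Fin n → ℤ) → ℂ) (v : Fin n → ℝ) (m : ℕ)
    (hzero : ∀ r < m, iteratedFDeriv ℝ r (maskP Q cc) v = 0)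
    (hcard : (Q.filter (cc · ≠ 0)).card ≤ m) : ∀ k ∈ Q, cc k = 0 := by
  set S := Q.filter (cc · ≠ 0)
  obtain ⟨u, hu⟩ := exists_injOn_dotProduct (K := ℝ) ((S : Set (Fin n → ℤ)).toFinite.image intVec)
  set w := fun k => cc k * exp (2 * (π : ℂ) * I * (intVec k ⬝ᵥ v : ℝ))
  set z := fun k : Fin n → ℤ => 2 * (π : ℂ) * I * (intVec k ⬝ᵥ u : ℝ)
  have hmoments : ∀ r < m, ∑ k ∈ Q, w k * z k ^ r = 0 := by
    intro r hr
    have hline := iteratedDeriv_comp_add_smul (r := r) ((contDiff_maskP Q cc).of_le le_top) v u 0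
    simp only [zero_smul, add_zero, hzero r hr, maskP_add_smul, iteratedDeriv_sum_mul_cexp] at hline
    simpa using hline
  have hz : Set.InjOn z S := by
    intro k hk k' hk' hkk'
    have h2piI : 2 * (π : ℂ) * I ≠ 0 := by simp [Real.pi_ne_zero]
    have hdot := hu (Set.mem_image_of_mem _ hk) (Set.mem_image_of_mem _ hk')
      (by exact_mod_cast mul_left_cancel₀ h2piI hkk')
    funext i
    simpa [intVec] using congrFun hdot i
  have hw := S.eq_zero_of_forall_sum_mul_pow_eq_zero w z hz fun r hr => by
    refine (Finset.sum_filter_of_ne (p := (cc · ≠ 0)) fun k _ hk hc => hk ?_).trans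
      (hmoments r (hr.trans_le hcard))
    simp [w, hc]
  intro k hk
  by_contra hck
  exact hck (by simpa [w] using hw k (Finset.mem_filter.mpr ⟨hk, hck⟩))

theorem stmt14_general {n : ℕ} (M : Matrix (Fin n) (Fin n) ℤ)
    (dstar : Fin n → ℤ)
    (Q : Finset (Fin n → ℤ)) (cc : (Fin n → ℤ) → ℂ) (hccQ : ∀ k ∉ Q, cc k = 0)
    (hnorm : ∑ k ∈ Q, cc k = 1) (ℓ : ℕ)
    (hzero : ∀ r : ℕ, r ≤ ℓ →
      iteratedFDeriv ℝ r (maskP Q cc)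
        (((M.map (Int.cast : ℤ → ℝ)).transpose)⁻¹.mulVec (intVec dstar)) = 0) :
    ℓ + 2 ≤ {k : Fin n → ℤ | cc k ≠ 0}.ncard := by
  have hsupport : {k | cc k ≠ 0} = ↑(Q.filter (cc · ≠ 0)) := by
    ext k
    simpa using fun hk => by_contra fun hkQ => hk (hccQ k hkQ)
  rw [hsupport, Set.ncard_coe_finset]
  by_contra! hcard
  have hvanish := maskP_coeff_eq_zero_of_iteratedFDeriv_eq_zero Q cc _ (ℓ + 1)
    (fun r hr => hzero r (Nat.lt_succ_iff.mp hr)) (by omega)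
  simp [Finset.sum_eq_zero hvanish] at hnorm

/-- a mask for a two-digit dilation matrix (`|det M| = 2`) with `c(0)=1`
having a zero of order `≥ ℓ+1` at `v = M^{-T}d*` has at least `ℓ+2` nonzero
coefficients. -/
theorem stmt14 {n : ℕ} (M : Matrix (Fin n) (Fin n) ℤ) (hM : IsExpanding M)
    (hdet : |M.det| = 2)
    (dstar : Fin n → ℤ) (hdstar : ¬ ∃ l : Fin n → ℤ, dstar = (Matrix.transpose M).mulVec l)
    (Q : Finset (Fin n → ℤ)) (cc : (Fin n → ℤ) → ℂ) (hccQ : ∀ k ∉ Q, cc k = 0)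
    (hnorm : ∑ k ∈ Q, cc k = 1) (ℓ : ℕ)
    (hzero : ∀ r : ℕ, r ≤ ℓ →
      iteratedFDeriv ℝ r (maskP Q cc)
        (((M.map (Int.cast : ℤ → ℝ)).transpose)⁻¹.mulVec (intVec dstar)) = 0) :
    ℓ + 2 ≤ {k : Fin n → ℤ | cc k ≠ 0}.ncard :=
  stmt14_general M dstar Q cc hccQ hnorm ℓ hzero
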